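/- arXiv:2605.12392 — 2 statements merged into one kernel-verified Lean document; each statement's English description precedes it below -/
import Mathlib

section
/- Let m ≥ 3 and let R be an algebraic curvature tensor on ℝ^m, with Ricci tensor Ric_{ij} = Σ_k R_{kikj}, scalar curvature S = Σ_i Ric_{ii}, Schouten tensor A_{ij} = Ric_{ij} − S/(2(m−1))·δ_{ij}, and Weyl tensor W_{ijkl} = R_{ijkl} − (1/(m−2))·(A⊘δ)_{ijkl}. Then a symmetric 2-index array P on ℝ^m is Riemann compatible with R if and only if P is Weyl compatible with W and P commutes with the Ricci tensor, i.e. Σ_l P_{jl}·Ric_{li} = Σ_l P_{il}·Ric_{lj} for all i, j. -/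
/-- The Kronecker delta on `Fin m`, regarded as a real 2-index array. -/
def kdelta (m : ℕ) (i j : Fin m) : ℝ := if i = j then 1 else 0

/-- An algebraic curvature tensor on `ℝ^m`: a 4-index real array with the symmetries
`R_{ijkl} = −R_{jikl} = −R_{ijlk} = R_{klij}` and the first Bianchi identity. -/
def IsCurvatureTensor (m : ℕ) (R : Fin m → Fin m → Fin m → Fin m → ℝ) : Prop :=
  (∀ i j k l, R j i k l = - R i j k l) ∧
  (∀ i j k l, R i j l k = - R i j k l) ∧
  (∀ i j k l, R k l i j = R i j k l) ∧
  (∀ i j k l, R i j k l + R i k l j + R i l j k = 0)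

/-- A 2-index array `P` is compatible with a 4-index array `K` if
`Σ_l (K_{liks}P_{jl} + K_{lisj}P_{kl} + K_{lijk}P_{sl}) = 0` for all `i, j, k, s`. -/
def Compatible (m : ℕ) (K : Fin m → Fin m → Fin m → Fin m → ℝ)
    (P : Fin m → Fin m → ℝ) : Prop :=
  ∀ i j k s : Fin m,
    ∑ l, (K l i k s * P j l + K l i s j * P k l + K l i j k * P s l) = 0

/-- The Ricci tensor `Ric_{ij} = Σ_k R_{kikj}` of a 4-index array. -/
def ricci (m : ℕ) (R : Fin m → Fin m → Fin m → Fin m → ℝ) (i j : Fin m) : ℝ :=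
  ∑ k, R k i k j

/-- The scalar curvature `S = Σ_i Ric_{ii}`. -/
def scalarCurv (m : ℕ) (R : Fin m → Fin m → Fin m → Fin m → ℝ) : ℝ :=
  ∑ i, ricci m R i i

/-- The Schouten tensor `A_{ij} = Ric_{ij} − S/(2(m−1))·δ_{ij}`. -/
noncomputable def schouten (m : ℕ) (R : Fin m → Fin m → Fin m → Fin m → ℝ) (i j : Fin m) : ℝ :=
  ricci m R i j - scalarCurv m R / (2 * ((m : ℝ) - 1)) * kdelta m i j

/-- The Kulkarni–Nomizu product of two 2-index arrays. -/
def kn (m : ℕ) (P Q : Fin m → Fin m → ℝ) (i j k l : Fin m) : ℝ :=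
  P i k * Q j l + P j l * Q i k - P i l * Q j k - P j k * Q i l

/-- The Weyl tensor `W = R − (1/(m−2))·(A⊘δ)`. -/
noncomputable def weyl (m : ℕ) (R : Fin m → Fin m → Fin m → Fin m → ℝ) (i j k l : Fin m) : ℝ :=
  R i j k l - (1 / ((m : ℝ) - 2)) * kn m (schouten m R) (kdelta m) i j k l

/-!
The Weyl tensor differs from `R` by `(A ⊘ δ) / (m - 2)`. Inserted into the compatibility
expression against a symmetric `P`, the term `A ⊘ δ` contributes only Kronecker-delta multiples
of the commutator `[P, A]`, and the scalar part of the Schouten tensor `A` drops out of it, so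
`[P, A] = [P, Ric]`. Hence once `P` commutes with `Ric`, Riemann and Weyl compatibility coincide;
conversely, tracing Riemann compatibility over `i = s` yields `[P, Ric] = 0`.
-/

open Finset

lemma sum_sum_antisymm_mul_symm_eq_zero {ι : Type*} [Fintype ι] {T P : ι → ι → ℝ}
    (hT : ∀ i j, T j i = -T i j) (hP : ∀ i j, P i j = P j i) :
    ∑ i, ∑ l, T l i * P i l = 0 := by
  have h : ∑ i, ∑ l, T l i * P i l = -∑ i, ∑ l, T l i * P i l := by
    simp only [← sum_neg_distrib]
    rw [sum_comm]
    exact sum_congr rfl fun i _ => sum_congr rfl fun l _ => by rw [hT l i, hP l i]; ring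
  linarith

section

variable {m : ℕ}

/-- `(PA)_{jk} − (PA)_{kj}`: for symmetric `P` and `A` this is the commutator `[P, A]_{jk}`. -/
def antisymmProd (m : ℕ) (P A : Fin m → Fin m → ℝ) (j k : Fin m) : ℝ :=
  ∑ l, P j l * A l k - ∑ l, P k l * A l j

def compatSum (m : ℕ) (K : Fin m → Fin m → Fin m → Fin m → ℝ) (P : Fin m → Fin m → ℝ)
    (i j k s : Fin m) : ℝ :=
  ∑ l, (K l i k s * P j l + K l i s j * P k l + K l i j k * P s l)

lemma compatible_iff_compatSum_eq_zero (K : Fin m → Fin m → Fin m → Fin m → ℝ)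
    (P : Fin m → Fin m → ℝ) :
    Compatible m K P ↔ ∀ i j k s, compatSum m K P i j k s = 0 :=
  Iff.rfl

lemma antisymmProd_sub_smul_kdelta {P : Fin m → Fin m → ℝ} (hP : ∀ i j, P i j = P j i)
    (A : Fin m → Fin m → ℝ) (c : ℝ) (j k : Fin m) :
    antisymmProd m P (fun a b => A a b - c * kdelta m a b) j k = antisymmProd m P A j k := by
  have hδ (a b : Fin m) : ∑ l, P a l * (c * kdelta m l b) = c * P a b := by
    simp [kdelta, mul_comm]
  simp only [antisymmProd, mul_sub, sum_sub_distrib, hδ, hP j k]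
  ring

lemma compatSum_sub_smul (K K' : Fin m → Fin m → Fin m → Fin m → ℝ) (c : ℝ)
    (P : Fin m → Fin m → ℝ) (i j k s : Fin m) :
    compatSum m (fun a b d e => K a b d e - c * K' a b d e) P i j k s
      = compatSum m K P i j k s - c * compatSum m K' P i j k s := by
  simp only [compatSum, mul_sum, ← sum_sub_distrib]
  exact sum_congr rfl fun _ _ => by ring

lemma sum_kn_kdelta_mul (A P : Fin m → Fin m → ℝ) (i j k s : Fin m) :
    ∑ l, kn m A (kdelta m) l i k s * P j l
      = kdelta m i s * ∑ l, P j l * A l k + A i s * P j k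
        - kdelta m i k * ∑ l, P j l * A l s - A i k * P j s := by
  simp only [kn, add_mul, sub_mul, sum_add_distrib, sum_sub_distrib]
  simp [kdelta, mul_comm]

lemma compatSum_kn_kdelta (A : Fin m → Fin m → ℝ) {P : Fin m → Fin m → ℝ}
    (hP : ∀ i j, P i j = P j i) (i j k s : Fin m) :
    compatSum m (kn m A (kdelta m)) P i j k s
      = kdelta m i s * antisymmProd m P A j k + kdelta m i k * antisymmProd m P A s j
        + kdelta m i j * antisymmProd m P A k s := by
  simp only [compatSum, sum_add_distrib, sum_kn_kdelta_mul, antisymmProd, hP j k, hP s j, hP k s]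
  ring

lemma compatSum_weyl (R : Fin m → Fin m → Fin m → Fin m → ℝ) {P : Fin m → Fin m → ℝ}
    (hP : ∀ i j, P i j = P j i) (i j k s : Fin m) :
    compatSum m (weyl m R) P i j k s
      = compatSum m R P i j k s - 1 / ((m : ℝ) - 2) *
          (kdelta m i s * antisymmProd m P (ricci m R) j k
            + kdelta m i k * antisymmProd m P (ricci m R) s j
            + kdelta m i j * antisymmProd m P (ricci m R) k s) := by
  have hA (a b : Fin m) : antisymmProd m P (schouten m R) a b = antisymmProd m P (ricci m R) a b :=
    antisymmProd_sub_smul_kdelta hP (ricci m R) (scalarCurv m R / (2 * ((m : ℝ) - 1))) a b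
  rw [show weyl m R = fun a b d e =>
      R a b d e - 1 / ((m : ℝ) - 2) * kn m (schouten m R) (kdelta m) a b d e from rfl,
    compatSum_sub_smul, compatSum_kn_kdelta _ hP, hA, hA, hA]

/-- Trace the compatibility condition over `i = s`; its last term vanishes because `R` is
skew in its first pair while `P` is symmetric. -/
lemma antisymmProd_ricci_eq_zero_of_compatible {R : Fin m → Fin m → Fin m → Fin m → ℝ}
    (hR₁ : ∀ i j k l, R j i k l = -R i j k l) (hR₂ : ∀ i j k l, R i j l k = -R i j k l)
    {P : Fin m → Fin m → ℝ} (hP : ∀ i j, P i j = P j i) (hC : Compatible m R P) (j k : Fin m) :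
    antisymmProd m P (ricci m R) j k = 0 := by
  have htrace : ∑ i, compatSum m R P i j k i = 0 := sum_eq_zero fun i _ => hC i j k i
  have h₁ : ∑ i, ∑ l, R l i k i * P j l = ∑ l, P j l * ricci m R l k := by
    rw [sum_comm]
    refine sum_congr rfl fun l _ => ?_
    simp only [ricci, mul_sum]
    exact sum_congr rfl fun i _ => by rw [hR₂, hR₁ l]; ring
  have h₂ : ∑ i, ∑ l, R l i i j * P k l = -∑ l, P k l * ricci m R l j := by
    rw [sum_comm, ← sum_neg_distrib]
    refine sum_congr rfl fun l _ => ?_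
    simp only [ricci, mul_sum, ← sum_neg_distrib]
    exact sum_congr rfl fun i _ => by rw [hR₁ l]; ring
  have h₃ : ∑ i, ∑ l, R l i j k * P i l = 0 :=
    sum_sum_antisymm_mul_symm_eq_zero (fun a b => hR₁ a b j k) hP
  simp only [compatSum, sum_add_distrib, h₁, h₂, h₃] at htrace
  rw [antisymmProd]
  linarith

lemma antisymmProd_eq_zero_iff {P A : Fin m → Fin m → ℝ} {j k : Fin m} :
    antisymmProd m P A j k = 0 ↔ ∑ l, P j l * A l k = ∑ l, P k l * A l j :=
  sub_eq_zero

end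

theorem riemann_compatible_iff_weyl_compatible_and_commutes_general
    (m : ℕ) (R : Fin m → Fin m → Fin m → Fin m → ℝ)
    (hR : IsCurvatureTensor m R)
    (P : Fin m → Fin m → ℝ) (hP : ∀ i j, P i j = P j i) :
    Compatible m R P ↔
      (Compatible m (weyl m R) P ∧
        ∀ i j, (∑ l, P j l * ricci m R l i) = ∑ l, P i l * ricci m R l j) := by
  simp only [compatible_iff_compatSum_eq_zero, ← antisymmProd_eq_zero_iff]
  constructor
  · intro hC
    have hcomm := antisymmProd_ricci_eq_zero_of_compatible hR.1 hR.2.1 hP hC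
    refine ⟨fun i j k s => ?_, fun i j => hcomm j i⟩
    rw [compatSum_weyl R hP, hC, hcomm, hcomm, hcomm]
    ring
  · rintro ⟨hW, hcomm⟩ i j k s
    have := compatSum_weyl R hP i j k s
    rw [hW, hcomm, hcomm, hcomm] at this
    linarith

/-- A symmetric 2-index array `P` is Riemann compatible with `R` if and only if it is
Weyl compatible with the Weyl tensor of `R` and commutes with the Ricci tensor of `R`. -/
theorem riemann_compatible_iff_weyl_compatible_and_commutes
    (m : ℕ) (hm : 3 ≤ m) (R : Fin m → Fin m → Fin m → Fin m → ℝ)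
    (hR : IsCurvatureTensor m R)
    (P : Fin m → Fin m → ℝ) (hP : ∀ i j, P i j = P j i) :
    Compatible m R P ↔
      (Compatible m (weyl m R) P ∧
        ∀ i j, (∑ l, P j l * ricci m R l i) = ∑ l, P i l * ricci m R l j) :=
  riemann_compatible_iff_weyl_compatible_and_commutes_general m R hR P hP
end

section
/- Let m ≥ 4 and let W be an algebraic Weyl tensor on ℝ^m. For a symmetric, trace-free 2-index array P, define (W*P)_{i₂…i_{m−2} j} = Σ_{l,k} W*_{l i₂…i_{m−2} k j} P_{lk}, where W*_{i₁…i_{m−2} j k} = Σ_{p,q} ε_{i₁…i_{m−2} p q} W_{pqjk}. Then W*P = 0 (all components vanish) if and only if P is Weyl compatible with W, i.e. Σ_l (W_{liks}P_{jl} + W_{lisj}P_{kl} + W_{lijk}P_{sl}) = 0 for all i, j, k, s. -/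
/-- An algebraic Weyl tensor on `ℝ^m`: a 4-index real array with the symmetries
`W_{ijkl} = −W_{jikl} = −W_{ijlk} = W_{klij}`, the first Bianchi identity, and which is
totally trace-free. -/
def IsWeylTensor (m : ℕ) (W : Fin m → Fin m → Fin m → Fin m → ℝ) : Prop :=
  (∀ i j k l, W j i k l = - W i j k l) ∧
  (∀ i j k l, W i j l k = - W i j k l) ∧
  (∀ i j k l, W k l i j = W i j k l) ∧
  (∀ i j k l, W i j k l + W i k l j + W i l j k = 0) ∧
  (∀ i j, ∑ k, W k i k j = 0)

/-- The Levi-Civita symbol on `Fin m`: the sign of the tuple regarded as a permutation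
when all its entries are distinct, and `0` otherwise. -/
noncomputable def leviCivita (m : ℕ) (σ : Fin m → Fin m) : ℝ :=
  if h : Function.Bijective σ then
    ((Equiv.Perm.sign (Equiv.ofBijective σ h) : ℤ) : ℝ)
  else 0

/-- The `m`-tuple `(i₁, …, i_{m−2}, p, q)` built from an `(m−2)`-tuple `I` and two
further indices `p`, `q`. -/
def extendTuple (m : ℕ) (I : Fin (m - 2) → Fin m) (p q : Fin m) (t : Fin m) : Fin m :=
  if ht : (t : ℕ) < m - 2 then I ⟨t, ht⟩ else if (t : ℕ) = m - 2 then p else q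

/-- The array `W*_{i₁…i_{m−2} j k} = Σ_{p,q} ε_{i₁…i_{m−2} p q} W_{pqjk}`. -/
noncomputable def wstar (m : ℕ) (W : Fin m → Fin m → Fin m → Fin m → ℝ)
    (I : Fin (m - 2) → Fin m) (j k : Fin m) : ℝ :=
  ∑ p, ∑ q, leviCivita m (extendTuple m I p q) * W p q j k

/-- The `(m−2)`-tuple `(l, i₂, …, i_{m−2})` built from an index `l` and an
`(m−3)`-tuple `J`. -/
def consTuple (m : ℕ) (l : Fin m) (J : Fin (m - 3) → Fin m) (t : Fin (m - 2)) : Fin m :=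
  if ht : (t : ℕ) = 0 then l
  else J ⟨(t : ℕ) - 1, by have h := t.isLt; omega⟩

/-- The array `(W*P)_{i₂…i_{m−2} j} = Σ_{l,k} W*_{l i₂…i_{m−2} k j} P_{lk}`. -/
noncomputable def wstarAction (m : ℕ) (W : Fin m → Fin m → Fin m → Fin m → ℝ)
    (P : Fin m → Fin m → ℝ) (J : Fin (m - 3) → Fin m) (j : Fin m) : ℝ :=
  ∑ l, ∑ k, wstar m W (consTuple m l J) k j * P l k

/-!
Put `T_{i l p q} = Σ_k W_{kipq} P_{lk}`, antisymmetric in `p, q`. Pair symmetry of `W` gives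
`(W*P)_{J i} = Σ_{l,p,q} ε_{l J p q} T_{i l p q}`, while Weyl compatibility says that the cyclic
sum `C_{i l p q}` of `T_{i l p q}` over `l, p, q` vanishes; `C` is totally antisymmetric in
`l, p, q`. As `ε_{l J p q}` is totally antisymmetric in `l, p, q` as well,
`3 (W*P)_{J i} = Σ_{l,p,q} ε_{l J p q} C_{i l p q}`, so compatibility implies `W*P = 0`.
Conversely, for distinct `l, p, q` let `J` list the remaining indices: then `ε_{· J · ·}` is
supported on the permutations of `(l, p, q)` and the sum collapses to
`6 ε_{l J p q} C_{i l p q}` with `ε_{l J p q} = ±1`.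
-/

section Alternating

variable {α : Type*}

def IsAlternating3 (f : α → α → α → ℝ) : Prop :=
  (∀ l p q, f p l q = -f l p q) ∧ ∀ l p q, f l q p = -f l p q

namespace IsAlternating3

variable {f : α → α → α → ℝ}

theorem apply_cycle (hf : IsAlternating3 f) (l p q : α) : f p q l = f l p q := by
  rw [hf.2, hf.1, hf.2, hf.1, neg_neg, neg_neg]

theorem apply_self_left (hf : IsAlternating3 f) (l q : α) : f l l q = 0 := by
  linarith [hf.1 l l q]

theorem apply_self_right (hf : IsAlternating3 f) (l p : α) : f l p p = 0 := by
  linarith [hf.2 l p p]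

theorem apply_self_outer (hf : IsAlternating3 f) (l p : α) : f l p l = 0 := by
  rw [hf.2, hf.apply_self_left, neg_zero]

theorem eq_zero_of_distinct (hf : IsAlternating3 f)
    (h : ∀ l p q, l ≠ p → l ≠ q → p ≠ q → f l p q = 0) (l p q : α) : f l p q = 0 := by
  rcases eq_or_ne l p with rfl | hlp
  · exact hf.apply_self_left l q
  rcases eq_or_ne l q with rfl | hlq
  · exact hf.apply_self_outer l p
  rcases eq_or_ne p q with rfl | hpq
  · exact hf.apply_self_right l p
  exact h l p q hlp hlq hpq

end IsAlternating3

theorem isAlternating3_cyclicSum {g : α → α → α → ℝ} (hg : ∀ l p q, g l q p = -g l p q) :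
    IsAlternating3 fun l p q => g l p q + g p q l + g q l p := by
  constructor <;> intro l p q <;> linarith [hg p q l, hg l p q, hg q l p]

variable [Fintype α]

theorem sum_sum_sum_cycle (F : α → α → α → ℝ) :
    ∑ l, ∑ p, ∑ q, F p q l = ∑ l, ∑ p, ∑ q, F l p q := by
  rw [Finset.sum_comm]
  exact Finset.sum_congr rfl fun _ _ => Finset.sum_comm

theorem sum_mul_cyclicSum {ε : α → α → α → ℝ} (hε : ∀ l p q, ε p q l = ε l p q)
    (g : α → α → α → ℝ) :
    ∑ l, ∑ p, ∑ q, ε l p q * (g l p q + g p q l + g q l p) =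
      3 * ∑ l, ∑ p, ∑ q, ε l p q * g l p q := by
  have h₁ : ∑ l, ∑ p, ∑ q, ε l p q * g p q l = ∑ l, ∑ p, ∑ q, ε l p q * g l p q := by
    rw [← sum_sum_sum_cycle fun l p q => ε l p q * g l p q]
    exact Finset.sum_congr rfl fun l _ => Finset.sum_congr rfl fun p _ =>
      Finset.sum_congr rfl fun q _ => by rw [← hε l p q]
  have h₂ : ∑ l, ∑ p, ∑ q, ε l p q * g q l p = ∑ l, ∑ p, ∑ q, ε l p q * g l p q := by
    rw [sum_sum_sum_cycle fun l p q => ε q l p * g q l p]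
    exact Finset.sum_congr rfl fun l _ => Finset.sum_congr rfl fun p _ =>
      Finset.sum_congr rfl fun q _ => by rw [hε q l p]
  simp only [mul_add, Finset.sum_add_distrib, h₁, h₂]
  ring

theorem sum_mul_eq_six_mul [DecidableEq α] {ε C : α → α → α → ℝ} (hε : IsAlternating3 ε)
    (hC : IsAlternating3 C) {j k s : α} (hjk : j ≠ k) (hjs : j ≠ s) (hks : k ≠ s)
    (hsupp : ∀ l p q, ε l p q ≠ 0 →
      l ∈ ({j, k, s} : Finset α) ∧ p ∈ ({j, k, s} : Finset α) ∧ q ∈ ({j, k, s} : Finset α)) :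
    ∑ l, ∑ p, ∑ q, ε l p q * C l p q = 6 * (ε j k s * C j k s) := by
  set S : Finset α := {j, k, s}
  have hzero : ∀ l p q, ¬ (l ∈ S ∧ p ∈ S ∧ q ∈ S) → ε l p q * C l p q = 0 := fun l p q h => by
    rw [not_imp_comm.mp (hsupp l p q) h, zero_mul]
  have hrestrict : ∑ l, ∑ p, ∑ q, ε l p q * C l p q =
      ∑ l ∈ S, ∑ p ∈ S, ∑ q ∈ S, ε l p q * C l p q := calc
    _ = ∑ l ∈ S, ∑ p, ∑ q, ε l p q * C l p q :=
      (Finset.sum_subset (Finset.subset_univ S) fun l _ hl => Finset.sum_eq_zero fun p _ =>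
        Finset.sum_eq_zero fun q _ => hzero l p q (by tauto)).symm
    _ = ∑ l ∈ S, ∑ p ∈ S, ∑ q, ε l p q * C l p q := Finset.sum_congr rfl fun l _ =>
      (Finset.sum_subset (Finset.subset_univ S) fun p _ hp =>
        Finset.sum_eq_zero fun q _ => hzero l p q (by tauto)).symm
    _ = _ := Finset.sum_congr rfl fun l _ => Finset.sum_congr rfl fun p _ =>
      (Finset.sum_subset (Finset.subset_univ S) fun q _ hq => hzero l p q (by tauto)).symm
  have h₁ : ∀ l p q, ε p l q * C p l q = ε l p q * C l p q := fun l p q => by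
    rw [hε.1, hC.1, neg_mul_neg]
  have h₂ : ∀ l p q, ε l q p * C l q p = ε l p q * C l p q := fun l p q => by
    rw [hε.2, hC.2, neg_mul_neg]
  rw [hrestrict]
  simp only [S, Finset.mem_insert, Finset.mem_singleton, hjk, hjs, hks, or_self,
    not_false_eq_true, Finset.sum_insert, Finset.sum_singleton, hε.apply_self_left,
    hε.apply_self_right, hε.apply_self_outer, zero_mul, zero_add, add_zero]
  linarith [h₁ j k s, h₂ j k s, h₁ j s k, h₂ k j s, h₂ s j k]

end Alternating

theorem injective_of_leviCivita_ne_zero {m : ℕ} {σ : Fin m → Fin m} (h : leviCivita m σ ≠ 0) :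
    Function.Injective σ := by
  by_contra hσ
  exact h (dif_neg fun hb => hσ hb.injective)

theorem leviCivita_perm_ne_zero {m : ℕ} (σ : Equiv.Perm (Fin m)) : leviCivita m σ ≠ 0 := by
  simp [leviCivita]

theorem leviCivita_comp_swap {m : ℕ} (σ : Fin m → Fin m) {a b : Fin m} (hab : a ≠ b) :
    leviCivita m (σ ∘ Equiv.swap a b) = -leviCivita m σ := by
  by_cases hσ : Function.Bijective σ
  · have hσ' : Function.Bijective (σ ∘ Equiv.swap a b) := hσ.comp (Equiv.swap a b).bijective
    have hmul : Equiv.ofBijective _ hσ' = Equiv.ofBijective σ hσ * Equiv.swap a b :=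
      Equiv.ext fun _ => rfl
    rw [leviCivita, leviCivita, dif_pos hσ, dif_pos hσ', hmul, map_mul,
      Equiv.Perm.sign_swap hab]
    push_cast
    ring
  · have hσ' : ¬ Function.Bijective (σ ∘ Equiv.swap a b) := fun h => hσ <| by
      simpa [Function.comp_assoc] using h.comp (Equiv.swap a b).bijective
    rw [leviCivita, leviCivita, dif_neg hσ, dif_neg hσ', neg_zero]

theorem Function.Injective.apply_mem_image_of_eqOn_compl {α β : Type*} [DecidableEq β]
    {τ σ : α → β} {S : Finset α} (hτ : Function.Injective τ) (hσ : Function.Surjective σ)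
    (h : ∀ t ∉ S, τ t = σ t) {t : α} (ht : t ∈ S) : τ t ∈ S.image σ := by
  obtain ⟨u, hu⟩ := hσ (τ t)
  by_cases hu' : u ∈ S
  · exact hu ▸ Finset.mem_image_of_mem σ hu'
  · have hut : u = t := hτ ((h u hu').trans hu)
    exact absurd (hut ▸ ht) hu'

section Tuple

variable {m : ℕ} (J : Fin (m - 3) → Fin m) (l p q : Fin m)

theorem extendTuple_consTuple_of_ne {t : Fin m} (h0 : (t : ℕ) ≠ 0) (h2 : (t : ℕ) ≠ m - 2)
    (h1 : (t : ℕ) ≠ m - 1) :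
    extendTuple m (consTuple m l J) p q t = J ⟨t - 1, by have := t.isLt; omega⟩ := by
  simp [extendTuple, consTuple, h0, show (t : ℕ) < m - 2 by omega]

variable (hm : 3 ≤ m)
include hm

theorem extendTuple_consTuple_zero :
    extendTuple m (consTuple m l J) p q ⟨0, by omega⟩ = l := by
  simp [extendTuple, consTuple, show 0 < m - 2 by omega]

theorem extendTuple_consTuple_sub_two :
    extendTuple m (consTuple m l J) p q ⟨m - 2, by omega⟩ = p := by
  simp [extendTuple]

theorem extendTuple_consTuple_sub_one :
    extendTuple m (consTuple m l J) p q ⟨m - 1, by omega⟩ = q := by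
  simp [extendTuple, show m - 1 ≠ m - 2 by omega, show ¬ m - 1 < m - 2 by omega]

theorem extendTuple_consTuple_comp_swap_zero :
    extendTuple m (consTuple m l J) p q ∘ Equiv.swap ⟨0, by omega⟩ ⟨m - 2, by omega⟩ =
      extendTuple m (consTuple m p J) l q := by
  funext t
  rcases eq_or_ne t ⟨0, by omega⟩ with rfl | h0
  · simp [extendTuple_consTuple_zero J _ _ _ hm, extendTuple_consTuple_sub_two J _ _ _ hm]
  rcases eq_or_ne t ⟨m - 2, by omega⟩ with rfl | h2
  · simp [extendTuple_consTuple_zero J _ _ _ hm, extendTuple_consTuple_sub_two J _ _ _ hm]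
  rcases eq_or_ne t ⟨m - 1, by omega⟩ with rfl | h1
  · simp [extendTuple_consTuple_sub_one J _ _ _ hm, Equiv.swap_apply_of_ne_of_ne h0 h2]
  simp only [Function.comp_apply, Equiv.swap_apply_of_ne_of_ne h0 h2,
    extendTuple_consTuple_of_ne J _ _ _ (Fin.val_ne_of_ne h0) (Fin.val_ne_of_ne h2)
      (Fin.val_ne_of_ne h1)]

theorem extendTuple_consTuple_comp_swap_sub_two :
    extendTuple m (consTuple m l J) p q ∘ Equiv.swap ⟨m - 2, by omega⟩ ⟨m - 1, by omega⟩ =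
      extendTuple m (consTuple m l J) q p := by
  funext t
  rcases eq_or_ne t ⟨m - 2, by omega⟩ with rfl | h2
  · simp [extendTuple_consTuple_sub_one J _ _ _ hm, extendTuple_consTuple_sub_two J _ _ _ hm]
  rcases eq_or_ne t ⟨m - 1, by omega⟩ with rfl | h1
  · simp [extendTuple_consTuple_sub_one J _ _ _ hm, extendTuple_consTuple_sub_two J _ _ _ hm]
  rcases eq_or_ne t ⟨0, by omega⟩ with rfl | h0
  · simp [extendTuple_consTuple_zero J _ _ _ hm, Equiv.swap_apply_of_ne_of_ne h2 h1]
  simp only [Function.comp_apply, Equiv.swap_apply_of_ne_of_ne h2 h1,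
    extendTuple_consTuple_of_ne J _ _ _ (Fin.val_ne_of_ne h0) (Fin.val_ne_of_ne h2)
      (Fin.val_ne_of_ne h1)]

end Tuple

noncomputable def leviCivita3 (m : ℕ) (J : Fin (m - 3) → Fin m) (l p q : Fin m) : ℝ :=
  leviCivita m (extendTuple m (consTuple m l J) p q)

theorem isAlternating3_leviCivita3 {m : ℕ} (hm : 3 ≤ m) (J : Fin (m - 3) → Fin m) :
    IsAlternating3 (leviCivita3 m J) := by
  constructor <;> intro l p q <;> simp only [leviCivita3]
  · rw [← extendTuple_consTuple_comp_swap_zero J l p q hm,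
      leviCivita_comp_swap _ (by simp [Fin.ext_iff]; omega)]
  · rw [← extendTuple_consTuple_comp_swap_sub_two J l p q hm,
      leviCivita_comp_swap _ (by simp [Fin.ext_iff]; omega)]

theorem exists_perm_apply_zero_sub_two_sub_one {m : ℕ} (hm : 3 ≤ m) {j k s : Fin m}
    (hjk : j ≠ k) (hjs : j ≠ s) (hks : k ≠ s) :
    ∃ σ : Equiv.Perm (Fin m),
      σ ⟨0, by omega⟩ = j ∧ σ ⟨m - 2, by omega⟩ = k ∧ σ ⟨m - 1, by omega⟩ = s := by
  have hslots : Function.Injective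
      ![(⟨0, by omega⟩ : Fin m), ⟨m - 2, by omega⟩, ⟨m - 1, by omega⟩] := by
    intro a b h
    fin_cases a <;> fin_cases b <;> simp_all [Fin.ext_iff] <;> omega
  have hvals : Function.Injective ![j, k, s] := by
    intro a b h
    fin_cases a <;> fin_cases b <;> simp_all [eq_comm]
  obtain ⟨σ, hσ⟩ := Equiv.Perm.exists_extending_pair _ _ hslots hvals
  exact ⟨σ, hσ 0, hσ 1, hσ 2⟩

theorem exists_leviCivita3_ne_zero {m : ℕ} (hm : 3 ≤ m) {j k s : Fin m} (hjk : j ≠ k)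
    (hjs : j ≠ s) (hks : k ≠ s) :
    ∃ J, leviCivita3 m J j k s ≠ 0 ∧ ∀ l p q, leviCivita3 m J l p q ≠ 0 →
      l ∈ ({j, k, s} : Finset (Fin m)) ∧ p ∈ ({j, k, s} : Finset (Fin m)) ∧
        q ∈ ({j, k, s} : Finset (Fin m)) := by
  obtain ⟨σ, hσ₀, hσ₁, hσ₂⟩ := exists_perm_apply_zero_sub_two_sub_one hm hjk hjs hks
  set S : Finset (Fin m) := {⟨0, by omega⟩, ⟨m - 2, by omega⟩, ⟨m - 1, by omega⟩}
  have hσS : S.image σ = {j, k, s} := by simp [S, hσ₀, hσ₁, hσ₂]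
  set J : Fin (m - 3) → Fin m := fun u => σ ⟨u + 1, by omega⟩
  have hoff : ∀ l p q, ∀ t ∉ S, extendTuple m (consTuple m l J) p q t = σ t := by
    intro l p q t ht
    simp only [S, Finset.mem_insert, Finset.mem_singleton, not_or, Fin.ext_iff] at ht
    rw [extendTuple_consTuple_of_ne J l p q ht.1 ht.2.1 ht.2.2]
    exact congrArg σ (Fin.ext (Nat.sub_add_cancel (Nat.pos_of_ne_zero ht.1)))
  have hjks : extendTuple m (consTuple m j J) k s = σ := by
    funext t
    by_cases ht : t ∈ S
    · simp only [S, Finset.mem_insert, Finset.mem_singleton] at ht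
      rcases ht with rfl | rfl | rfl
      · rw [extendTuple_consTuple_zero J j k s hm, hσ₀]
      · rw [extendTuple_consTuple_sub_two J j k s hm, hσ₁]
      · rw [extendTuple_consTuple_sub_one J j k s hm, hσ₂]
    · exact hoff j k s t ht
  refine ⟨J, by rw [leviCivita3, hjks]; exact leviCivita_perm_ne_zero σ, fun l p q hlpq => ?_⟩
  have hinj := injective_of_leviCivita_ne_zero hlpq
  -- off the three free slots the tuple already takes every value outside `{j, k, s}`
  have hmem := fun t (ht : t ∈ S) =>
    hσS ▸ hinj.apply_mem_image_of_eqOn_compl σ.surjective (hoff l p q) ht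
  refine ⟨?_, ?_, ?_⟩
  · simpa [extendTuple_consTuple_zero J l p q hm] using hmem ⟨0, by omega⟩ (by simp [S])
  · simpa [extendTuple_consTuple_sub_two J l p q hm] using hmem ⟨m - 2, by omega⟩ (by simp [S])
  · simpa [extendTuple_consTuple_sub_one J l p q hm] using hmem ⟨m - 1, by omega⟩ (by simp [S])

section Contraction

variable {m : ℕ} (W : Fin m → Fin m → Fin m → Fin m → ℝ) (P : Fin m → Fin m → ℝ)

def weylContract (i l p q : Fin m) : ℝ :=
  ∑ k, W k i p q * P l k

theorem compatible_iff_cyclicSum_weylContract :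
    Compatible m W P ↔ ∀ i l p q,
      weylContract W P i l p q + weylContract W P i p q l + weylContract W P i q l p = 0 := by
  simp only [Compatible, weylContract, Finset.sum_add_distrib]

variable {W} in
theorem weylContract_swap (hW : ∀ i j k l, W i j l k = -W i j k l) (i l p q : Fin m) :
    weylContract W P i l q p = -weylContract W P i l p q := by
  simp only [weylContract, hW _ _ p q, neg_mul, Finset.sum_neg_distrib]

variable {W} in
theorem wstarAction_eq_sum_leviCivita3_mul (hW : ∀ i j k l, W k l i j = W i j k l)
    (J : Fin (m - 3) → Fin m) (j : Fin m) :
    wstarAction m W P J j =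
      ∑ l, ∑ p, ∑ q, leviCivita3 m J l p q * weylContract W P j l p q := by
  simp only [wstarAction, wstar, weylContract, leviCivita3, Finset.sum_mul, Finset.mul_sum,
    mul_assoc, hW _ _ _ j]
  refine Finset.sum_congr rfl fun l _ => ?_
  rw [Finset.sum_comm]
  exact Finset.sum_congr rfl fun p _ => Finset.sum_comm

end Contraction

theorem wstarAction_eq_zero_iff_weyl_compatible_general
    (m : ℕ) (hm : 4 ≤ m) (W : Fin m → Fin m → Fin m → Fin m → ℝ)
    (hW : IsWeylTensor m W)
    (P : Fin m → Fin m → ℝ) :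
    (∀ (J : Fin (m - 3) → Fin m) (j : Fin m), wstarAction m W P J j = 0) ↔
      Compatible m W P := by
  obtain ⟨-, hW₂, hWpair, -, -⟩ := hW
  have hm₃ : 3 ≤ m := by omega
  have hε := isAlternating3_leviCivita3 hm₃
  have hC := fun i => isAlternating3_cyclicSum (weylContract_swap P hW₂ i)
  have hsum := fun J i => sum_mul_cyclicSum (hε J).apply_cycle (weylContract W P i)
  simp only [wstarAction_eq_sum_leviCivita3_mul P hWpair, compatible_iff_cyclicSum_weylContract]
  constructor
  · intro h i
    refine (hC i).eq_zero_of_distinct fun l p q hlp hlq hpq => ?_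
    obtain ⟨J, hJ, hsupp⟩ := exists_leviCivita3_ne_zero hm₃ hlp hlq hpq
    have := hsum J i
    rw [h J i, sum_mul_eq_six_mul (hε J) (hC i) hlp hlq hpq hsupp] at this
    simpa [hJ] using this
  · intro hcyc J i
    have := hsum J i
    simp only [hcyc, mul_zero, Finset.sum_const_zero] at this
    linarith

/-- For a symmetric trace-free `P`, `W*P = 0` if and only if `P` is Weyl compatible. -/
theorem wstarAction_eq_zero_iff_weyl_compatible
    (m : ℕ) (hm : 4 ≤ m) (W : Fin m → Fin m → Fin m → Fin m → ℝ)
    (hW : IsWeylTensor m W)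
    (P : Fin m → Fin m → ℝ) (hPsymm : ∀ i j, P i j = P j i)
    (hPtr : (∑ i, P i i) = 0) :
    (∀ (J : Fin (m - 3) → Fin m) (j : Fin m), wstarAction m W P J j = 0) ↔
      Compatible m W P :=
  wstarAction_eq_zero_iff_weyl_compatible_general m hm W hW P
end
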